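/- arXiv:1901.07138 — 2 statements merged into one kernel-verified Lean document; each statement's English description precedes it below -/
import Mathlib

section
/- Let Δ be a nonnegative random variable with P(Δ > 0) > 0 and Laplace–Stieltjes transform L(ϑ) = E[exp(−ϑΔ)]; let n be a random variable with values in {1,2,3,...} and probability generating function g(z) = E[z^n] (so g(0) = 0); let w be a nonnegative random variable with P(w > 0) > 0 and Laplace–Stieltjes transform l(v) = E[exp(−vw)]; let λ > 0. Suppose complex numbers θ, z, v satisfy Re θ ≥ 0, |z| ≤ 1, Re v ≥ 0, and at least one of the three strict inequalities Re θ > 0, |z| < 1, Re v > 0 holds (equivalently: all three strict, with any two weakened to non-strict). Then |L(θ + λ − λ·g(z·l(v)))| < 1. -/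
/-!
Writing `u = z l(v)`, the bounds `‖l(v)‖ ≤ 1` and `‖g(u)‖ ≤ ‖u‖` (the latter because `n ≥ 1`)
give `Re(θ + λ - λ g(u)) ≥ Re θ + λ (1 - ‖u‖) ≥ 0`, and each of the three strict hypotheses makes
this strict: `‖l(v)‖ < 1` when `Re v > 0`, since `w > 0` with positive probability. It remains
that `‖L(ϑ)‖ < 1` whenever `Re ϑ > 0`, for the same reason applied to `Δ`.
-/

open MeasureTheory

lemma Complex.norm_exp_neg_mul_ofReal (v : ℂ) (x : ℝ) :
    ‖Complex.exp (-v * x)‖ = Real.exp (-(v.re * x)) := by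
  rw [Complex.norm_exp]
  simp

lemma Complex.norm_exp_neg_mul_ofReal_le_one {v : ℂ} (hv : 0 ≤ v.re) {x : ℝ} (hx : 0 ≤ x) :
    ‖Complex.exp (-v * x)‖ ≤ 1 := by
  rw [Complex.norm_exp_neg_mul_ofReal, Real.exp_le_one_iff, neg_nonpos]
  exact mul_nonneg hv hx

lemma Complex.re_add_sub_mul_pos {θ w : ℂ} {lam : ℝ} (hθ : 0 ≤ θ.re) (hlam : 0 < lam)
    (hw : ‖w‖ ≤ 1) (hstrict : 0 < θ.re ∨ ‖w‖ < 1) : 0 < (θ + lam - lam * w).re := by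
  have hre : (θ + lam - lam * w).re = θ.re + lam * (1 - w.re) := by
    simp only [Complex.sub_re, Complex.add_re, Complex.ofReal_re, Complex.mul_re, Complex.ofReal_im,
      zero_mul, sub_zero]
    ring
  have hwre : w.re ≤ ‖w‖ := Complex.re_le_norm w
  rw [hre]
  rcases hstrict with h | h <;> nlinarith

section

variable {Ω : Type*} [MeasurableSpace Ω] {P : Measure Ω} [IsProbabilityMeasure P]

lemma integral_lt_one_of_le_one {f : Ω → ℝ} (hfi : Integrable f P) (hf1 : ∀ ω, f ω ≤ 1)
    (hlt : 0 < P {ω | f ω < 1}) : ∫ ω, f ω ∂P < 1 := by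
  have hsupp : Function.support (fun ω => 1 - f ω) = {ω | f ω < 1} := by
    ext ω
    change 1 - f ω ≠ 0 ↔ f ω < 1
    rw [sub_ne_zero, ne_comm, (hf1 ω).lt_iff_ne]
  have hpos : 0 < ∫ ω, (1 - f ω) ∂P := by
    rw [integral_pos_iff_support_of_nonneg (fun ω => sub_nonneg.mpr (hf1 ω))
      ((integrable_const 1).sub hfi), hsupp]
    exact hlt
  rw [integral_sub (integrable_const 1) hfi] at hpos
  simpa using hpos

lemma integral_exp_neg_mul_lt_one {c : ℝ} (hc : 0 < c) {X : Ω → ℝ} (hXm : Measurable X)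
    (hX0 : ∀ ω, 0 ≤ X ω) (hXpos : 0 < P {ω | 0 < X ω}) :
    ∫ ω, Real.exp (-(c * X ω)) ∂P < 1 := by
  have hle : ∀ ω, Real.exp (-(c * X ω)) ≤ 1 := fun ω =>
    Real.exp_le_one_iff.mpr (neg_nonpos.mpr (mul_nonneg hc.le (hX0 ω)))
  have hint : Integrable (fun ω => Real.exp (-(c * X ω))) P :=
    .of_bound (by fun_prop) 1 (.of_forall fun ω => by
      rw [Real.norm_of_nonneg (Real.exp_pos _).le]; exact hle ω)
  refine integral_lt_one_of_le_one hint hle ?_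
  simpa only [Real.exp_lt_one_iff, neg_neg_iff_pos, mul_pos_iff_of_pos_left hc] using hXpos

lemma norm_integral_exp_neg_mul_le_one {X : Ω → ℝ} (hX0 : ∀ ω, 0 ≤ X ω) {v : ℂ}
    (hv : 0 ≤ v.re) : ‖∫ ω, Complex.exp (-v * X ω) ∂P‖ ≤ 1 := by
  simpa using norm_integral_le_of_norm_le_const (μ := P)
    (.of_forall fun ω => Complex.norm_exp_neg_mul_ofReal_le_one hv (hX0 ω))

lemma norm_integral_exp_neg_mul_lt_one {X : Ω → ℝ} (hXm : Measurable X) (hX0 : ∀ ω, 0 ≤ X ω)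
    (hXpos : 0 < P {ω | 0 < X ω}) {v : ℂ} (hv : 0 < v.re) :
    ‖∫ ω, Complex.exp (-v * X ω) ∂P‖ < 1 :=
  calc ‖∫ ω, Complex.exp (-v * X ω) ∂P‖ ≤ ∫ ω, ‖Complex.exp (-v * X ω)‖ ∂P :=
        norm_integral_le_integral_norm _
    _ = ∫ ω, Real.exp (-(v.re * X ω)) ∂P := by simp only [Complex.norm_exp_neg_mul_ofReal]
    _ < 1 := integral_exp_neg_mul_lt_one hv hXm hX0 hXpos

lemma norm_integral_pow_le_norm {n : Ω → ℕ} (hn1 : ∀ ω, 1 ≤ n ω) {u : ℂ} (hu : ‖u‖ ≤ 1) :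
    ‖∫ ω, u ^ n ω ∂P‖ ≤ ‖u‖ := by
  simpa using norm_integral_le_of_norm_le_const (μ := P) (.of_forall fun ω => by
    rw [norm_pow]; exact pow_le_of_le_one (norm_nonneg u) hu (by have := hn1 ω; omega))

end

theorem norm_gamma_lt_one_general
    {Ω : Type*} [MeasurableSpace Ω] (P : Measure Ω) [IsProbabilityMeasure P]
    (Δ : Ω → ℝ) (n : Ω → ℕ) (w : Ω → ℝ)
    (hΔm : Measurable Δ) (hwm : Measurable w)
    (hΔ0 : ∀ ω, 0 ≤ Δ ω) (hΔpos : 0 < P {ω | 0 < Δ ω})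
    (hn1 : ∀ ω, 1 ≤ n ω)
    (hw0 : ∀ ω, 0 ≤ w ω) (hwpos : 0 < P {ω | 0 < w ω})
    (lam : ℝ) (hlam : 0 < lam)
    -- the Laplace–Stieltjes transform of `Δ`
    (L : ℂ → ℂ) (hL : ∀ ϑ : ℂ, 0 ≤ ϑ.re → L ϑ = ∫ ω, Complex.exp (-ϑ * Δ ω) ∂P)
    -- the probability generating function of `n`
    (g : ℂ → ℂ) (hg : ∀ z : ℂ, ‖z‖ ≤ 1 → g z = ∫ ω, z ^ n ω ∂P)
    -- the Laplace–Stieltjes transform of `w`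
    (l : ℂ → ℂ) (hl : ∀ v : ℂ, 0 ≤ v.re → l v = ∫ ω, Complex.exp (-v * w ω) ∂P)
    (θ z v : ℂ)
    (hθ : 0 ≤ θ.re) (hz : ‖z‖ ≤ 1) (hv : 0 ≤ v.re)
    (hstrict : 0 < θ.re ∨ ‖z‖ < 1 ∨ 0 < v.re) :
    ‖L (θ + lam - lam * g (z * l v))‖ < 1 := by
  have hlv : ‖l v‖ ≤ 1 := hl v hv ▸ norm_integral_exp_neg_mul_le_one hw0 hv
  have hu : ‖z * l v‖ ≤ 1 := by
    rw [norm_mul]; exact mul_le_one₀ hz (norm_nonneg _) hlv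
  have hgu : ‖g (z * l v)‖ ≤ ‖z * l v‖ := hg _ hu ▸ norm_integral_pow_le_norm hn1 hu
  have hstrict' : 0 < θ.re ∨ ‖z * l v‖ < 1 := by
    rw [norm_mul]
    rcases hstrict with hθ' | hz' | hv'
    · exact .inl hθ'
    · exact .inr (mul_lt_one_of_nonneg_of_lt_one_left (norm_nonneg _) hz' hlv)
    · have hlv' : ‖l v‖ < 1 := hl v hv ▸ norm_integral_exp_neg_mul_lt_one hwm hw0 hwpos hv'
      exact .inr (mul_lt_one_of_nonneg_of_lt_one_right hz (norm_nonneg _) hlv')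
  have hre := Complex.re_add_sub_mul_pos hθ hlam (hgu.trans hu) (hstrict'.imp_right hgu.trans_lt)
  rw [hL _ hre.le]
  exact norm_integral_exp_neg_mul_lt_one hΔm hΔ0 hΔpos hre

/-- Theorem 2.2 of the paper: the norm bound
`‖L(θ + λ − λ g(z l(v)))‖ < 1` for the joint transform of the observed increments. -/
theorem norm_gamma_lt_one
    {Ω : Type*} [MeasurableSpace Ω] (P : Measure Ω) [IsProbabilityMeasure P]
    (Δ : Ω → ℝ) (n : Ω → ℕ) (w : Ω → ℝ)
    (hΔm : Measurable Δ) (hnm : Measurable n) (hwm : Measurable w)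
    (hΔ0 : ∀ ω, 0 ≤ Δ ω) (hΔpos : 0 < P {ω | 0 < Δ ω})
    (hn1 : ∀ ω, 1 ≤ n ω)
    (hw0 : ∀ ω, 0 ≤ w ω) (hwpos : 0 < P {ω | 0 < w ω})
    (lam : ℝ) (hlam : 0 < lam)
    -- the Laplace–Stieltjes transform of `Δ`
    (L : ℂ → ℂ) (hL : ∀ ϑ : ℂ, 0 ≤ ϑ.re → L ϑ = ∫ ω, Complex.exp (-ϑ * Δ ω) ∂P)
    -- the probability generating function of `n`
    (g : ℂ → ℂ) (hg : ∀ z : ℂ, ‖z‖ ≤ 1 → g z = ∫ ω, z ^ n ω ∂P)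
    -- the Laplace–Stieltjes transform of `w`
    (l : ℂ → ℂ) (hl : ∀ v : ℂ, 0 ≤ v.re → l v = ∫ ω, Complex.exp (-v * w ω) ∂P)
    (θ z v : ℂ)
    (hθ : 0 ≤ θ.re) (hz : ‖z‖ ≤ 1) (hv : 0 ≤ v.re)
    (hstrict : 0 < θ.re ∨ ‖z‖ < 1 ∨ 0 < v.re) :
    ‖L (θ + lam - lam * g (z * l v))‖ < 1 :=
  norm_gamma_lt_one_general P Δ n w hΔm hwm hΔ0 hΔpos hn1 hw0 hwpos lam hlam L hL g hg l hl θ z v hθ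
    hz hv hstrict
end

section
/- Let (N_n)_{n≥0} be a nondecreasing sequence of natural numbers and (W_n)_{n≥0} a nondecreasing sequence of nonnegative reals, with the convention N_{−1} = 0 and W_{−1} = 0. For p, q ∈ ℕ and s ∈ [0,∞) define μ_1(p) = inf{n ≥ 0 : N_n > p}, μ(q) = inf{n ≥ 0 : N_n > q}, and ν(s) = inf{n ≥ 0 : W_n > s}. Then for all integers 0 ≤ j < k < n, all complex x, y with |x| < 1 and |y| < 1, and all complex w with Re w > 0: (1−x)(1−y)·w · Σ_{p=0}^{∞} Σ_{q=0}^{∞} x^p y^q ∫_{0}^{∞} e^{−ws} · 1{p < q} · 1{μ_1(p) = j} · 1{μ(q) = k} · 1{ν(s) = n} ds = (x^{N_{j−1}} − x^{N_j}) · (y^{N_{k−1}} − y^{N_k}) · (e^{−w·W_{n−1}} − e^{−w·W_n}). In particular the result is insensitive to the constraint p < q: omitting the factor 1{p < q} yields the same value. -/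
open MeasureTheory

noncomputable section

/-- The first index `n` at which `pred n` holds, as an extended natural (`⊤` if none). -/
def firstIdx (pred : ℕ → Prop) : ℕ∞ := sInf {m : ℕ∞ | ∃ n : ℕ, m = n ∧ pred n}

/-! For monotone `N`, the event `μ₁(p) = j` is `p ∈ [N_{j-1}, N_j)`, and likewise for `μ` and `ν`,
so the integrand factors into three interval indicators and the transform is a product of two
finite geometric sums and a Laplace transform over an interval, each of which telescopes.
The constraint `p < q` is invisible because `μ₁(p) = j < k = μ(q)` already forces
`p < N_j ≤ q`. -/

open Set

section FirstIdx

theorem firstIdx_eq_coe_iff (pred : ℕ → Prop) (j : ℕ) :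
    firstIdx pred = (j : ℕ∞) ↔ pred j ∧ ∀ m < j, ¬ pred m := by
  constructor
  · intro h
    have hne : {m : ℕ∞ | ∃ n : ℕ, m = n ∧ pred n}.Nonempty := by
      by_contra hempty
      rw [not_nonempty_iff_eq_empty] at hempty
      simp [firstIdx, hempty] at h
    obtain ⟨i, hi, hpred⟩ := csInf_mem hne
    obtain rfl : i = j := by exact_mod_cast hi.symm.trans h
    refine ⟨hpred, fun m hm hm' => ?_⟩
    have : firstIdx pred ≤ m := sInf_le ⟨m, rfl, hm'⟩
    rw [h, Nat.cast_le] at this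
    omega
  · rintro ⟨hj, hlt⟩
    refine IsLeast.csInf_eq ⟨⟨j, rfl, hj⟩, ?_⟩
    rintro _ ⟨m, rfl, hm⟩
    exact Nat.cast_le.mpr (not_lt.mp fun h => hlt m h hm)

variable {α : Type*} [LinearOrder α]

theorem lt_of_firstIdx_lt_firstIdx {f : ℕ → α} {a b : α} {j k : ℕ}
    (ha : firstIdx (fun m => a < f m) = j) (hb : firstIdx (fun m => b < f m) = k)
    (hjk : j < k) : a < b :=
  ((firstIdx_eq_coe_iff _ _).mp ha).1.trans_le
    (not_lt.mp (((firstIdx_eq_coe_iff _ _).mp hb).2 j hjk))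

theorem setOf_firstIdx_lt_eq_zero {f : ℕ → α} :
    {a | firstIdx (fun m => a < f m) = ((0 : ℕ) : ℕ∞)} = Iio (f 0) := by
  ext a
  rw [mem_ofPred_eq, firstIdx_eq_coe_iff]
  simp

theorem setOf_firstIdx_lt_eq_Ico {f : ℕ → α} (hf : Monotone f) {j : ℕ} (hj : j ≠ 0) :
    {a | firstIdx (fun m => a < f m) = (j : ℕ∞)} = Ico (f (j - 1)) (f j) := by
  ext a
  simp only [mem_ofPred_eq, firstIdx_eq_coe_iff, mem_Ico, not_lt]
  constructor
  · rintro ⟨hlt, hle⟩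
    exact ⟨hle (j - 1) (by omega), hlt⟩
  · rintro ⟨hle, hlt⟩
    exact ⟨hlt, fun m hm => (hf (by omega : m ≤ j - 1)).trans hle⟩

theorem setOf_firstIdx_lt_eq_Ico_nat {N : ℕ → ℕ} (hN : Monotone N) (j : ℕ) :
    {p | firstIdx (fun m => p < N m) = (j : ℕ∞)} =
      Ico (if j = 0 then 0 else N (j - 1)) (N j) := by
  split_ifs with hj
  · subst hj
    rw [setOf_firstIdx_lt_eq_zero, ← Nat.bot_eq_zero, Ico_bot]
  · exact setOf_firstIdx_lt_eq_Ico hN hj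

end FirstIdx

theorem indicator_lt_mul_indicator_mul_indicator {α R : Type*} [LT α] [MulZeroOneClass R]
    {A B : Set α} (hAB : ∀ a ∈ A, ∀ b ∈ B, a < b) (a b : α) :
    {ab : α × α | ab.1 < ab.2}.indicator (fun _ => (1 : R)) (a, b) *
        A.indicator (fun _ => 1) a * B.indicator (fun _ => 1) b
      = A.indicator (fun _ => 1) a * B.indicator (fun _ => 1) b := by
  by_cases ha : a ∈ A
  · by_cases hb : b ∈ B
    · simp [ha, hb, hAB a ha b hb]
    · simp [hb]
  · simp [ha]

theorem mul_tsum_pow_mul_indicator_Ico {K : Type*} [Field K] [TopologicalSpace K]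
    {x : K} (hx : x ≠ 1) {a b : ℕ} (hab : a ≤ b) :
    (1 - x) * ∑' p : ℕ, x ^ p * (Ico a b).indicator (fun _ => (1 : K)) p = x ^ a - x ^ b := by
  have hsum : ∑' p : ℕ, x ^ p * (Ico a b).indicator (fun _ => (1 : K)) p
      = ∑ p ∈ Finset.Ico a b, x ^ p := by
    rw [tsum_eq_sum (s := Finset.Ico a b) fun p hp => by simp_all]
    exact Finset.sum_congr rfl fun p hp => by simp_all
  rw [hsum, geom_sum_Ico hx hab]
  field_simp [sub_ne_zero.mpr hx]
  ring

theorem mul_integral_exp_mul_indicator_Ico {w : ℂ} (hw : w ≠ 0) {c d : ℝ} (hc : 0 ≤ c)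
    (hcd : c ≤ d) :
    w * ∫ s in Ioi (0 : ℝ), Complex.exp (-w * s) * (Ico c d).indicator (fun _ => (1 : ℂ)) s
      = Complex.exp (-w * c) - Complex.exp (-w * d) := by
  have hind : ∀ s : ℝ, Complex.exp (-w * s) * (Ico c d).indicator (fun _ => (1 : ℂ)) s
      = (Ico c d).indicator (fun s : ℝ => Complex.exp (-w * s)) s := fun s => by
    by_cases hs : s ∈ Ico c d <;> simp [hs]
  have hsub : Ici (0 : ℝ) ∩ Ico c d = Ico c d :=
    inter_eq_right.mpr fun s hs => hc.trans hs.1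
  simp only [hind]
  rw [setIntegral_congr_set Ioi_ae_eq_Ici, setIntegral_indicator measurableSet_Ico, hsub,
    setIntegral_congr_set Ico_ae_eq_Ioc, ← intervalIntegral.integral_of_le hcd,
    integral_exp_mul_complex (neg_ne_zero.mpr hw)]
  field_simp
  ring

/-- The operator `D_{pqs}` applied to the indicator of a box `[a, b) × [a', b') × [c, d)`. -/
theorem D_indicator_Ico_prod {x y w : ℂ} (hx : x ≠ 1) (hy : y ≠ 1) (hw : w ≠ 0)
    {a b a' b' : ℕ} (hab : a ≤ b) (hab' : a' ≤ b') {c d : ℝ} (hc : 0 ≤ c) (hcd : c ≤ d) :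
    (1 - x) * (1 - y) * w * ∑' p : ℕ, ∑' q : ℕ, x ^ p * y ^ q *
        ∫ s in Ioi (0 : ℝ), Complex.exp (-w * s) *
          ((Ico a b).indicator (fun _ => (1 : ℂ)) p * (Ico a' b').indicator (fun _ => (1 : ℂ)) q *
            (Ico c d).indicator (fun _ => (1 : ℂ)) s)
      = (x ^ a - x ^ b) * (y ^ a' - y ^ b') * (Complex.exp (-w * c) - Complex.exp (-w * d)) := by
  set I := ∫ s in Ioi (0 : ℝ), Complex.exp (-w * s) * (Ico c d).indicator (fun _ => (1 : ℂ)) s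
  have hsplit : ∀ p q : ℕ, x ^ p * y ^ q * ∫ s in Ioi (0 : ℝ), Complex.exp (-w * s) *
          ((Ico a b).indicator (fun _ => (1 : ℂ)) p * (Ico a' b').indicator (fun _ => (1 : ℂ)) q *
            (Ico c d).indicator (fun _ => (1 : ℂ)) s)
      = x ^ p * (Ico a b).indicator (fun _ => (1 : ℂ)) p *
          (y ^ q * (Ico a' b').indicator (fun _ => (1 : ℂ)) q) * I := fun p q => by
    simp only [I, mul_left_comm (Complex.exp _), integral_const_mul]
    ring
  simp only [hsplit, tsum_mul_right, tsum_mul_left]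
  rw [← mul_tsum_pow_mul_indicator_Ico hx hab, ← mul_tsum_pow_mul_indicator_Ico hy hab',
    ← mul_integral_exp_mul_indicator_Ico hw hc hcd]
  ring

/-- Lemma 3.1 of the paper, `M₁`-level insensitivity: the action of the
three-fold operator `D_{pqs}` on the indicator `1{p<q} 1{μ₁(p)=j} 1{μ(q)=k} 1{ν(s)=n}`
for `j < k < n`, and the insensitivity to the constraint `p < q`. -/
theorem D_operator_insensitivity
    (N : ℕ → ℕ) (W : ℕ → ℝ) (hN : Monotone N) (hW : Monotone W) (hW0 : ∀ m, 0 ≤ W m)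
    (j k n : ℕ) (hjk : j < k) (hkn : k < n)
    (x y w : ℂ) (hx : ‖x‖ < 1) (hy : ‖y‖ < 1) (hw : 0 < w.re) :
    ((1 - x) * (1 - y) * w * ∑' p : ℕ, ∑' q : ℕ, x ^ p * y ^ q *
        ∫ s in Set.Ioi (0 : ℝ), Complex.exp (-w * s) *
          (Set.indicator {pq : ℕ × ℕ | pq.1 < pq.2} (fun _ => (1 : ℂ)) (p, q) *
            Set.indicator {p : ℕ | firstIdx (fun m => p < N m) = (j : ℕ∞)} (fun _ => (1 : ℂ)) p *
            Set.indicator {q : ℕ | firstIdx (fun m => q < N m) = (k : ℕ∞)} (fun _ => (1 : ℂ)) q *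
            Set.indicator {s : ℝ | firstIdx (fun m => s < W m) = (n : ℕ∞)} (fun _ => (1 : ℂ)) s)
      = (x ^ (if j = 0 then 0 else N (j - 1)) - x ^ N j) *
          (y ^ (if k = 0 then 0 else N (k - 1)) - y ^ N k) *
          (Complex.exp (-w * (if n = 0 then (0 : ℝ) else W (n - 1)))
            - Complex.exp (-w * W n)))
    ∧
    ((1 - x) * (1 - y) * w * ∑' p : ℕ, ∑' q : ℕ, x ^ p * y ^ q *
        ∫ s in Set.Ioi (0 : ℝ), Complex.exp (-w * s) *
          (Set.indicator {p : ℕ | firstIdx (fun m => p < N m) = (j : ℕ∞)} (fun _ => (1 : ℂ)) p *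
            Set.indicator {q : ℕ | firstIdx (fun m => q < N m) = (k : ℕ∞)} (fun _ => (1 : ℂ)) q *
            Set.indicator {s : ℝ | firstIdx (fun m => s < W m) = (n : ℕ∞)} (fun _ => (1 : ℂ)) s)
      = (x ^ (if j = 0 then 0 else N (j - 1)) - x ^ N j) *
          (y ^ (if k = 0 then 0 else N (k - 1)) - y ^ N k) *
          (Complex.exp (-w * (if n = 0 then (0 : ℝ) else W (n - 1)))
            - Complex.exp (-w * W n))) := by
  have hx1 : x ≠ 1 := fun h => by simp [h] at hx
  have hy1 : y ≠ 1 := fun h => by simp [h] at hy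
  have hw0 : w ≠ 0 := fun h => by simp [h] at hw
  have hk : k ≠ 0 := by omega
  have hn : n ≠ 0 := by omega
  -- `p < N j ≤ q` on the support, so the factor `1{p < q}` is identically one there
  have hordered : ∀ p ∈ {p : ℕ | firstIdx (fun m => p < N m) = (j : ℕ∞)},
      ∀ q ∈ {q : ℕ | firstIdx (fun m => q < N m) = (k : ℕ∞)}, p < q :=
    fun p hp q hq => lt_of_firstIdx_lt_firstIdx hp hq hjk
  have hj : (if j = 0 then 0 else N (j - 1)) ≤ N j := by
    split_ifs
    exacts [Nat.zero_le _, hN (Nat.sub_le j 1)]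
  have hunconstrained := D_indicator_Ico_prod hx1 hy1 hw0 hj (hN (Nat.sub_le k 1))
    (hW0 (n - 1)) (hW (Nat.sub_le n 1))
  simp only [indicator_lt_mul_indicator_mul_indicator (R := ℂ) hordered]
  simp only [setOf_firstIdx_lt_eq_Ico_nat hN, setOf_firstIdx_lt_eq_Ico hW hn, if_neg hk,
    if_neg hn]
  exact ⟨hunconstrained, hunconstrained⟩
end
end
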